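/- arXiv:1210.7357 — 9 statements merged into one kernel-verified Lean document; each statement's English description precedes it below -/
import Mathlib

section
/- For every complex number s with Re(s) > 1, the Riemann zeta function satisfies ζ(s) = s·(s+1)/(s−1) · ∫_0^1 ⌊1/x⌋·(x·⌊1/x⌋ + x − 1)·x^{s−1} dx, i.e. ζ(s) equals s(s+1)/(s−1) times the Mellin transform of the harmonic sawtooth map w(x) = ⌊1/x⌋·(x·⌊1/x⌋ + x − 1) on the unit interval. -/
/-!
On `(1/(n+1), 1/n]` we have `⌊1/x⌋ = n`, so the harmonic sawtooth is the linear function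
`n(n+1)x - n` there, and its Mellin transform over that piece is elementary:
`n^(-s)/(s+1) - (n^(1-s) - (n+1)^(1-s) + (n+1)^(-s))/(s(s+1))`.
Summed over `n ≥ 1`, the middle terms telescope to `1`, leaving
`ζ(s)/(s+1) - ζ(s)/(s(s+1)) = (s-1)/(s(s+1)) · ζ(s)`.
-/

open MeasureTheory Set Filter Topology Function

lemma Complex.ofReal_inv_cpow {a : ℝ} (ha : 0 ≤ a) (r : ℂ) :
    ((a⁻¹ : ℝ) : ℂ) ^ r = (a : ℂ) ^ (-r) := by
  rw [Complex.ofReal_inv, Complex.inv_cpow_ofReal_nonneg ha, Complex.cpow_neg]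

lemma tendsto_natCast_cpow_atTop_zero {s : ℂ} (hs : s.re < 0) :
    Tendsto (fun n : ℕ => (n : ℂ) ^ s) atTop (𝓝 0) := by
  rw [tendsto_zero_iff_norm_tendsto_zero]
  have hlim := (tendsto_rpow_neg_atTop (neg_pos.2 hs)).comp tendsto_natCast_atTop_atTop
  rw [neg_neg] at hlim
  exact hlim.congr' ((eventually_gt_atTop 0).mono fun n hn =>
    (Complex.norm_natCast_cpow_of_pos hn s).symm)

lemma hasSum_natCast_add_one_cpow_neg {s : ℂ} (hs : 1 < s.re) :
    HasSum (fun n : ℕ => ((n + 1 : ℕ) : ℂ) ^ (-s)) (riemannZeta s) := by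
  have hsum : Summable fun n : ℕ => 1 / ((n : ℂ) + 1) ^ s := by
    exact_mod_cast (summable_nat_add_iff 1).2 (Complex.summable_one_div_nat_cpow.2 hs)
  rw [zeta_eq_tsum_one_div_nat_add_one_cpow hs]
  push_cast
  simpa only [Complex.cpow_neg, one_div] using hsum.hasSum

lemma setIntegral_Ioc_inv_affine_mul_cpow {s : ℂ} (hs₀ : s ≠ 0) (hs₁ : s + 1 ≠ 0) {a : ℝ}
    (ha : 0 < a) :
    ∫ x in Ioc (a + 1)⁻¹ a⁻¹, ((a * (a + 1) * x - a : ℝ) : ℂ) * (x : ℂ) ^ (s - 1) =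
      (s + 1)⁻¹ * (a : ℂ) ^ (-s) -
        (s * (s + 1))⁻¹ * ((a : ℂ) ^ (1 - s) - ((a : ℂ) + 1) ^ (1 - s) + ((a : ℂ) + 1) ^ (-s)) := by
  have hle : (a + 1)⁻¹ ≤ a⁻¹ := inv_anti₀ ha (by linarith)
  have hzero : (0 : ℝ) ∉ uIcc (a + 1)⁻¹ a⁻¹ := by
    rw [uIcc_of_le hle]
    exact fun h => (not_le.2 (by positivity)) h.1
  have hint (r : ℂ) : IntervalIntegrable (fun x : ℝ => (x : ℂ) ^ r) volume (a + 1)⁻¹ a⁻¹ :=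
    intervalIntegral.intervalIntegrable_cpow (Or.inr hzero)
  rw [← intervalIntegral.integral_of_le hle]
  calc ∫ x in (a + 1)⁻¹..a⁻¹, ((a * (a + 1) * x - a : ℝ) : ℂ) * (x : ℂ) ^ (s - 1)
      = ∫ x in (a + 1)⁻¹..a⁻¹, ((a * (a + 1) : ℂ) * (x : ℂ) ^ s - a * (x : ℂ) ^ (s - 1)) := by
        refine intervalIntegral.integral_congr fun x hx => ?_
        have hx : (x : ℂ) ≠ 0 := Complex.ofReal_ne_zero.2 fun h => hzero (h ▸ hx)
        simp only [Complex.cpow_sub _ _ hx, Complex.cpow_one]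
        push_cast
        field_simp
    _ = _ := by
        have hA : (a : ℂ) ≠ 0 := by exact_mod_cast ha.ne'
        have hB : (a : ℂ) + 1 ≠ 0 := by exact_mod_cast (by positivity : a + 1 ≠ 0)
        rw [intervalIntegral.integral_sub ((hint _).const_mul _) ((hint _).const_mul _),
          intervalIntegral.integral_const_mul, intervalIntegral.integral_const_mul,
          integral_cpow (Or.inr ⟨mt eq_neg_iff_add_eq_zero.1 hs₁, hzero⟩),
          integral_cpow (Or.inr ⟨by simpa using hs₀, hzero⟩),
          sub_add_cancel]
        simp only [Complex.ofReal_inv_cpow ha.le,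
          Complex.ofReal_inv_cpow (by positivity : 0 ≤ a + 1)]
        push_cast
        rw [neg_add, Complex.cpow_add _ _ hA, Complex.cpow_add _ _ hB, sub_eq_add_neg 1 s,
          Complex.cpow_add _ _ hA, Complex.cpow_add _ _ hB]
        simp only [Complex.cpow_neg_one, Complex.cpow_one]
        field_simp
        ring

lemma tendsto_sum_range_zeta_telescoping {s : ℂ} (hs : 1 < s.re) :
    Tendsto (fun N : ℕ => ∑ n ∈ Finset.range N,
      ((s + 1)⁻¹ * ((n + 1 : ℕ) : ℂ) ^ (-s) - (s * (s + 1))⁻¹ *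
        (((n + 1 : ℕ) : ℂ) ^ (1 - s) - (((n + 1 : ℕ) : ℂ) + 1) ^ (1 - s) +
          (((n + 1 : ℕ) : ℂ) + 1) ^ (-s))))
      atTop (𝓝 ((s - 1) / (s * (s + 1)) * riemannZeta s)) := by
  have hs₀ : s ≠ 0 := by rintro rfl; norm_num at hs
  have hs₁ : s + 1 ≠ 0 := by rw [Ne, add_eq_zero_iff_eq_neg]; rintro rfl; norm_num at hs
  have hp := hasSum_natCast_add_one_cpow_neg hs
  have hp' : HasSum (fun n : ℕ => (((n + 1 : ℕ) : ℂ) + 1) ^ (-s)) (riemannZeta s - 1) := by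
    simpa [Nat.cast_add] using (hasSum_nat_add_iff' 1).2 hp
  have hg : Tendsto (fun N : ℕ => ((N + 1 : ℕ) : ℂ) ^ (1 - s)) atTop (𝓝 0) :=
    (tendsto_natCast_cpow_atTop_zero (by rw [Complex.sub_re, Complex.one_re]; linarith)).comp
      (tendsto_add_atTop_nat 1)
  have hlim := (Tendsto.const_mul (s + 1)⁻¹ hp.tendsto_sum_nat).sub <|
    Tendsto.const_mul (s * (s + 1))⁻¹
      (((tendsto_const_nhds (x := (1 : ℂ))).sub hg).add hp'.tendsto_sum_nat)
  convert hlim using 2 with N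
  · have htel := Finset.sum_range_sub' (fun m : ℕ => ((m + 1 : ℕ) : ℂ) ^ (1 - s)) N
    rw [Finset.sum_sub_distrib, ← Finset.mul_sum, ← Finset.mul_sum, Finset.sum_add_distrib]
    push_cast at htel ⊢
    rw [htel, Complex.one_cpow]
  · field_simp
    ring

lemma floor_one_div_eq_of_mem_Ioc {n : ℕ} {x : ℝ} (hx : x ∈ Ioc ((n : ℝ) + 1)⁻¹ (n : ℝ)⁻¹) :
    ⌊1 / x⌋ = n := by
  obtain ⟨hlo, hhi⟩ := hx
  have hx₀ : 0 < x := lt_trans (by positivity) hlo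
  have hn : 0 < (n : ℝ) := by
    by_contra! h
    linarith [inv_nonpos.2 h]
  rw [Int.floor_eq_iff, one_div]
  exact ⟨by exact_mod_cast (le_inv_comm₀ hx₀ hn).1 hhi,
    by exact_mod_cast (inv_lt_comm₀ (by positivity) hx₀).1 hlo⟩

lemma iUnion_Ioc_inv_natCast : ⋃ n : ℕ, Ioc ((n : ℝ) + 1)⁻¹ (n : ℝ)⁻¹ = Ioc 0 1 := by
  ext x
  simp only [mem_iUnion]
  constructor
  · rintro ⟨n | n, hlo, hhi⟩
    · simp only [CharP.cast_eq_zero, zero_add, inv_one, inv_zero] at hlo hhi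
      linarith
    · exact ⟨lt_trans (by positivity) hlo, hhi.trans (Nat.cast_inv_le_one _)⟩
  · rintro ⟨hx₀, hx₁⟩
    have hn : 0 < ⌊1 / x⌋₊ := Nat.floor_pos.2 ((one_le_div hx₀).2 hx₁)
    refine ⟨⌊1 / x⌋₊, ?_, ?_⟩
    · rw [inv_lt_comm₀ (by positivity) hx₀, ← one_div]
      exact Nat.lt_floor_add_one _
    · rw [le_inv_comm₀ hx₀ (by positivity), ← one_div]
      exact Nat.floor_le (by positivity)

lemma pairwise_disjoint_Ioc_inv_natCast :
    Pairwise (Disjoint on fun n : ℕ => Ioc ((n : ℝ) + 1)⁻¹ (n : ℝ)⁻¹) := by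
  intro m n hmn
  refine Set.disjoint_left.2 fun x hm hn => hmn ?_
  exact_mod_cast (floor_one_div_eq_of_mem_Ioc hm).symm.trans (floor_one_div_eq_of_mem_Ioc hn)

lemma hasSum_setIntegral_Ioc_inv_natCast {E : Type*} [NormedAddCommGroup E] [NormedSpace ℝ E]
    {f : ℝ → E} (hf : IntegrableOn f (Ioc 0 1)) :
    HasSum (fun n : ℕ => ∫ x in Ioc ((n : ℝ) + 1)⁻¹ (n : ℝ)⁻¹, f x) (∫ x in Ioc 0 1, f x) := by
  rw [← iUnion_Ioc_inv_natCast] at hf ⊢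
  exact hasSum_integral_iUnion (fun _ => measurableSet_Ioc) pairwise_disjoint_Ioc_inv_natCast hf

noncomputable def harmonicSawtooth (x : ℝ) : ℝ := ⌊1 / x⌋ * (x * ⌊1 / x⌋ + x - 1)

lemma abs_harmonicSawtooth_le_one {x : ℝ} (hx : 0 < x) : |harmonicSawtooth x| ≤ 1 := by
  have hk₀ : (0 : ℝ) ≤ ⌊1 / x⌋ := by exact_mod_cast Int.floor_nonneg.2 (by positivity)
  have hk₁ : (⌊1 / x⌋ : ℝ) * x ≤ 1 := (le_div_iff₀ hx).1 (Int.floor_le _)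
  have hk₂ : 1 < ((⌊1 / x⌋ : ℝ) + 1) * x := (div_lt_iff₀ hx).1 (Int.lt_floor_add_one _)
  rw [harmonicSawtooth, abs_le]
  constructor <;> nlinarith

lemma measurable_harmonicSawtooth : Measurable harmonicSawtooth := by
  unfold harmonicSawtooth
  fun_prop

lemma integrableOn_harmonicSawtooth_mul_cpow {s : ℂ} (hs : 0 < s.re) :
    IntegrableOn (fun x : ℝ => (harmonicSawtooth x : ℂ) * (x : ℂ) ^ (s - 1)) (Ioc 0 1) := by
  refine Integrable.bdd_mul (c := 1)
    (intervalIntegral.intervalIntegrable_cpow' (by simpa using hs)).1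
    (Complex.measurable_ofReal.comp measurable_harmonicSawtooth).aestronglyMeasurable ?_
  filter_upwards [ae_restrict_mem measurableSet_Ioc] with x hx
  simpa using abs_harmonicSawtooth_le_one hx.1

lemma harmonicSawtooth_eq_of_mem_Ioc {n : ℕ} {x : ℝ} (hx : x ∈ Ioc ((n : ℝ) + 1)⁻¹ (n : ℝ)⁻¹) :
    harmonicSawtooth x = n * (n + 1) * x - n := by
  rw [harmonicSawtooth, floor_one_div_eq_of_mem_Ioc hx]
  push_cast
  ring

lemma setIntegral_Ioc_inv_natCast_harmonicSawtooth_mul_cpow {s : ℂ} (hs₀ : s ≠ 0) (hs₁ : s + 1 ≠ 0)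
    {n : ℕ} (hn : 0 < n) :
    ∫ x in Ioc ((n : ℝ) + 1)⁻¹ (n : ℝ)⁻¹, (harmonicSawtooth x : ℂ) * (x : ℂ) ^ (s - 1) =
      (s + 1)⁻¹ * (n : ℂ) ^ (-s) -
        (s * (s + 1))⁻¹ * ((n : ℂ) ^ (1 - s) - ((n : ℂ) + 1) ^ (1 - s) + ((n : ℂ) + 1) ^ (-s)) := by
  rw [setIntegral_congr_fun measurableSet_Ioc fun x hx => by rw [harmonicSawtooth_eq_of_mem_Ioc hx],
    setIntegral_Ioc_inv_affine_mul_cpow hs₀ hs₁ (Nat.cast_pos.2 hn), Complex.ofReal_natCast]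

theorem riemannZeta_eq_mellin_harmonic_sawtooth (s : ℂ) (hs : 1 < s.re) :
    riemannZeta s = s * (s + 1) / (s - 1) *
      ∫ x : ℝ in Set.Ioo (0 : ℝ) 1,
        ((⌊1 / x⌋ : ℂ) * ((x : ℂ) * (⌊1 / x⌋ : ℂ) + (x : ℂ) - 1) * (x : ℂ) ^ (s - 1)) := by
  have hs₀ : s ≠ 0 := by rintro rfl; norm_num at hs
  have hs₁ : s + 1 ≠ 0 := by rw [Ne, add_eq_zero_iff_eq_neg]; rintro rfl; norm_num at hs
  have hs₂ : s - 1 ≠ 0 := sub_ne_zero.2 (by rintro rfl; norm_num at hs)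
  have hpieces := (hasSum_nat_add_iff' 1).2 <|
    hasSum_setIntegral_Ioc_inv_natCast (integrableOn_harmonicSawtooth_mul_cpow (by linarith))
  -- the `n = 0` piece is `Ioc 1 0⁻¹ = Ioc 1 0 = ∅`
  rw [Finset.sum_range_one, Nat.cast_zero, zero_add, inv_one, inv_zero,
    Ioc_eq_empty_of_le zero_le_one, Measure.restrict_empty, integral_zero_measure,
    sub_zero] at hpieces
  have hmellin : ∫ x in Ioc 0 1, (harmonicSawtooth x : ℂ) * (x : ℂ) ^ (s - 1) =
      (s - 1) / (s * (s + 1)) * riemannZeta s :=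
    tendsto_nhds_unique (hpieces.tendsto_sum_nat.congr fun N => Finset.sum_congr rfl fun n _ =>
      setIntegral_Ioc_inv_natCast_harmonicSawtooth_mul_cpow hs₀ hs₁ n.succ_pos)
      (tendsto_sum_range_zeta_telescoping hs)
  push_cast [harmonicSawtooth] at hmellin
  rw [← integral_Ioc_eq_integral_Ioo, hmellin]
  field_simp
end

section
/- For every complex number s with Re(s) > 0 and s ≠ 1, the infinite series Σ_{n=1}^∞ (n·(n+1)^{−s} − n^{1−s} + s·n^{−s}) converges and ζ(s) = (1/(s−1)) · Σ_{n=1}^∞ (n·(n+1)^{−s} − n^{1−s} + s·n^{−s}). -/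
/-!
For `x > 0`, `x (x + 1)^{-s} - x^{1-s} + s x^{-s}` is `x` times the first-order Taylor
remainder of `t ↦ t^{-s}` between `x` and `x + 1`, hence `O(|s| |s + 1| x^{-Re s - 1})`. The
series therefore converges locally uniformly on `Re s > 0` and is holomorphic there. For
`Re s > 1`, writing `(n + 1)(n + 2)^{-s} = (n + 2)^{1-s} - (n + 2)^{-s}` splits it into a
telescoping series and `-∑ (n + 2)^{-s} + s ∑ (n + 1)^{-s}`, with total
`-1 - (ζ(s) - 1) + s ζ(s) = (s - 1) ζ(s)`. Since `(s - 1) ζ(s)` extends to an entire function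
(the residue of `ζ` at `1` is `1`), the identity theorem gives the equality on the whole
half-plane.
-/

open Filter Set Topology

theorem norm_sub_sub_smul_deriv_le {E : Type*} [NormedAddCommGroup E] [NormedSpace ℝ E]
    {f f' f'' : ℝ → E} {a b C : ℝ} (hab : a ≤ b)
    (hf : ∀ t ∈ Icc a b, HasDerivWithinAt f (f' t) (Icc a b) t)
    (hf' : ∀ t ∈ Icc a b, HasDerivWithinAt f' (f'' t) (Icc a b) t)
    (hC : ∀ t ∈ Icc a b, ‖f'' t‖ ≤ C) :
    ‖f b - f a - (b - a) • f' a‖ ≤ C * (b - a) ^ 2 := by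
  have ha : a ∈ Icc a b := left_mem_Icc.2 hab
  have hb : b ∈ Icc a b := right_mem_Icc.2 hab
  have hf'_le : ∀ t ∈ Icc a b, ‖f' t - f' a‖ ≤ C * (b - a) := fun t ht => by
    calc ‖f' t - f' a‖ ≤ C * ‖t - a‖ :=
          (convex_Icc a b).norm_image_sub_le_of_norm_hasDerivWithin_le hf' hC ha ht
      _ ≤ C * (b - a) := by
          have hC0 : 0 ≤ C := (norm_nonneg _).trans (hC a ha)
          rw [Real.norm_of_nonneg (sub_nonneg.2 ht.1)]
          exact mul_le_mul_of_nonneg_left (by linarith [ht.2]) hC0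
  have hg : ∀ t ∈ Icc a b,
      HasDerivWithinAt (fun u => f u - u • f' a) (f' t - f' a) (Icc a b) t := fun t ht =>
    ((hf t ht).sub ((hasDerivWithinAt_id t _).smul_const (f' a))).congr_deriv (by rw [one_smul])
  have := (convex_Icc a b).norm_image_sub_le_of_norm_hasDerivWithin_le hg hf'_le ha hb
  rw [Real.norm_of_nonneg (sub_nonneg.2 hab)] at this
  calc ‖f b - f a - (b - a) • f' a‖ = ‖f b - b • f' a - (f a - a • f' a)‖ := by
        rw [sub_smul]; congr 1; abel
    _ ≤ C * (b - a) * (b - a) := this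
    _ = C * (b - a) ^ 2 := by ring

theorem hasDerivAt_ofReal_add_cpow {x t : ℝ} (h : 0 < x + t) (c : ℂ) :
    HasDerivAt (fun u : ℝ => ((x + u : ℝ) : ℂ) ^ c)
      (c * ((x + t : ℝ) : ℂ) ^ (c - 1)) t := by
  have hslit : (x : ℂ) + (t : ℂ) ∈ Complex.slitPlane := by
    exact_mod_cast Complex.ofReal_mem_slitPlane.2 h
  simpa using (((hasDerivAt_id (t : ℂ)).const_add (x : ℂ)).cpow_const hslit).comp_ofReal

theorem norm_mul_cpow_taylor_remainder_le {x : ℝ} (hx : 0 < x) {s : ℂ} (hs : -2 ≤ s.re) :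
    ‖(x : ℂ) * ((x : ℂ) + 1) ^ (-s) - (x : ℂ) ^ (1 - s) + s * (x : ℂ) ^ (-s)‖ ≤
      ‖s‖ * ‖s + 1‖ * x ^ (-s.re - 1) := by
  have hpos : ∀ t ∈ Icc (0 : ℝ) 1, 0 < x + t := fun t ht => by linarith [ht.1]
  have key := norm_sub_sub_smul_deriv_le (f := fun t : ℝ => ((x + t : ℝ) : ℂ) ^ (-s))
    (f' := fun t => -s * ((x + t : ℝ) : ℂ) ^ (-s - 1))
    (f'' := fun t => -s * ((-s - 1) * ((x + t : ℝ) : ℂ) ^ (-s - 1 - 1)))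
    (C := ‖s‖ * ‖s + 1‖ * x ^ (-s.re - 2)) zero_le_one
    (fun t ht => (hasDerivAt_ofReal_add_cpow (hpos t ht) _).hasDerivWithinAt)
    (fun t ht => ((hasDerivAt_ofReal_add_cpow (hpos t ht) _).const_mul _).hasDerivWithinAt)
    (fun t ht => by
      have hnorm : ‖((x + t : ℝ) : ℂ) ^ (-s - 1 - 1)‖ = (x + t) ^ (-s.re - 2) := by
        rw [Complex.norm_cpow_eq_rpow_re_of_pos (hpos t ht)]
        congr 1
        simp only [Complex.sub_re, Complex.neg_re, Complex.one_re]
        ring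
      have hmono : (x + t) ^ (-s.re - 2) ≤ x ^ (-s.re - 2) :=
        Real.rpow_le_rpow_of_nonpos hx (by linarith [ht.1]) (by linarith)
      rw [norm_mul, norm_mul, norm_neg, hnorm, show -s - 1 = -(s + 1) by ring, norm_neg,
        ← mul_assoc]
      gcongr)
  have hx0 : (x : ℂ) ≠ 0 := Complex.ofReal_ne_zero.2 hx.ne'
  have hexpand : (x : ℂ) * ((x : ℂ) + 1) ^ (-s) - (x : ℂ) ^ (1 - s) + s * (x : ℂ) ^ (-s) =
      (x : ℂ) * (((x : ℂ) + 1) ^ (-s) - (x : ℂ) ^ (-s) - -s * (x : ℂ) ^ (-s - 1)) := by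
    have h1 : (x : ℂ) ^ (1 - s) = x * (x : ℂ) ^ (-s) := by
      rw [sub_eq_add_neg, Complex.cpow_add _ _ hx0, Complex.cpow_one]
    have h2 : (x : ℂ) ^ (-s) = x * (x : ℂ) ^ (-s - 1) := by
      rw [Complex.cpow_sub _ _ hx0, Complex.cpow_one, mul_div_cancel₀ _ hx0]
    rw [h1, h2]
    ring
  simp only [Complex.ofReal_add, Complex.ofReal_one, add_zero, sub_zero,
    one_smul, one_pow, mul_one] at key
  rw [hexpand, norm_mul, Complex.norm_real, Real.norm_of_nonneg hx.le]
  calc x * _ ≤ x * (‖s‖ * ‖s + 1‖ * x ^ (-s.re - 2)) := by gcongr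
    _ = ‖s‖ * ‖s + 1‖ * x ^ (-s.re - 1) := by
      rw [show -s.re - 1 = -s.re - 2 + 1 by ring, Real.rpow_add_one hx.ne']
      ring

noncomputable def zetaSeriesTerm (s : ℂ) (n : ℕ) : ℂ :=
  ((n : ℂ) + 1) * ((n : ℂ) + 2) ^ (-s) - ((n : ℂ) + 1) ^ ((1 : ℂ) - s)
    + s * ((n : ℂ) + 1) ^ (-s)

theorem norm_zetaSeriesTerm_le {s : ℂ} (hs : -2 ≤ s.re) (n : ℕ) :
    ‖zetaSeriesTerm s n‖ ≤ ‖s‖ * ‖s + 1‖ * ((n : ℝ) + 1) ^ (-s.re - 1) := by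
  have h := norm_mul_cpow_taylor_remainder_le (x := (n : ℝ) + 1) (by positivity) hs
  push_cast at h
  rwa [add_assoc, one_add_one_eq_two] at h

theorem summable_nat_add_one_rpow {p : ℝ} (hp : p < -1) :
    Summable (fun n : ℕ => ((n : ℝ) + 1) ^ p) := by
  simpa using (summable_nat_add_iff 1).2 (Real.summable_nat_rpow.2 hp)

theorem summable_zetaSeriesTerm {s : ℂ} (hs : 0 < s.re) : Summable (zetaSeriesTerm s) :=
  .of_norm_bounded ((summable_nat_add_one_rpow (by linarith)).mul_left _)
    (norm_zetaSeriesTerm_le (by linarith))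

theorem differentiable_zetaSeriesTerm (n : ℕ) :
    Differentiable ℂ (fun s => zetaSeriesTerm s n) := by
  have h1 : (n : ℂ) + 1 ≠ 0 := by exact_mod_cast n.succ_ne_zero
  have h2 : (n : ℂ) + 2 ≠ 0 := by exact_mod_cast (n + 1).succ_ne_zero
  unfold zetaSeriesTerm
  fun_prop (disch := simp [h1, h2])

theorem differentiableOn_tsum_zetaSeriesTerm :
    DifferentiableOn ℂ (fun s => ∑' n, zetaSeriesTerm s n) {s | 0 < s.re} := by
  intro s₀ (hs₀ : 0 < s₀.re)
  set V := {s : ℂ | s₀.re / 2 < s.re} ∩ Metric.ball 0 (‖s₀‖ + 1)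
  have hV : IsOpen V :=
    (isOpen_lt continuous_const Complex.continuous_re).inter Metric.isOpen_ball
  have hs₀V : s₀ ∈ V := ⟨show s₀.re / 2 < s₀.re by linarith, by simp⟩
  refine (DifferentiableOn.differentiableAt ?_ (hV.mem_nhds hs₀V)).differentiableWithinAt
  refine Complex.differentiableOn_tsum_of_summable_norm
    ((summable_nat_add_one_rpow (p := -(s₀.re / 2) - 1) (by linarith)).mul_left
      ((‖s₀‖ + 1) * (‖s₀‖ + 2)))
    (fun n => (differentiable_zetaSeriesTerm n).differentiableOn) hV
    fun n s ⟨(hre : s₀.re / 2 < s.re), hball⟩ => ?_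
  rw [Metric.mem_ball, dist_zero_right] at hball
  have hs_add_one : ‖s + 1‖ ≤ ‖s₀‖ + 2 :=
    (norm_add_le _ _).trans (by rw [norm_one]; linarith)
  calc ‖zetaSeriesTerm s n‖ ≤ ‖s‖ * ‖s + 1‖ * ((n : ℝ) + 1) ^ (-s.re - 1) :=
        norm_zetaSeriesTerm_le (by linarith) n
    _ ≤ (‖s₀‖ + 1) * (‖s₀‖ + 2) * ((n : ℝ) + 1) ^ (-(s₀.re / 2) - 1) := by
        gcongr
        · linarith

theorem hasSum_sub_of_tendsto {G : Type*} [AddCommGroup G] [TopologicalSpace G]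
    [IsTopologicalAddGroup G] [T2Space G] {f : ℕ → G} {l : G}
    (hf : Tendsto f atTop (𝓝 l)) (hsum : Summable (fun n => f (n + 1) - f n)) :
    HasSum (fun n => f (n + 1) - f n) (l - f 0) := by
  rw [hsum.hasSum_iff_tendsto_nat]
  simpa only [Finset.sum_range_sub] using hf.sub_const (f 0)

theorem hasSum_nat_add_one_cpow_neg {s : ℂ} (hs : 1 < s.re) :
    HasSum (fun n : ℕ => ((n : ℂ) + 1) ^ (-s)) (riemannZeta s) := by
  have hsum : Summable (fun n : ℕ => ((n : ℂ) + 1) ^ (-s)) := by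
    simpa [Complex.cpow_neg] using
      (summable_nat_add_iff 1).2 (Complex.summable_one_div_nat_cpow.2 hs)
  convert hsum.hasSum
  simp [zeta_eq_tsum_one_div_nat_add_one_cpow hs, Complex.cpow_neg]

theorem hasSum_zetaSeriesTerm {s : ℂ} (hs : 1 < s.re) :
    HasSum (zetaSeriesTerm s) ((s - 1) * riemannZeta s) := by
  set g : ℕ → ℂ := fun n => ((n : ℂ) + 1) ^ (1 - s)
  have hζ := hasSum_nat_add_one_cpow_neg hs
  have hζ' : HasSum (fun n : ℕ => ((n : ℂ) + 2) ^ (-s)) (riemannZeta s - 1) := by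
    have := (hasSum_nat_add_iff' 1).2 hζ
    simpa [add_assoc, one_add_one_eq_two] using this
  have hsplit : ∀ n, zetaSeriesTerm s n = (g (n + 1) - g n)
      - (((n : ℂ) + 2) ^ (-s) - s * ((n : ℂ) + 1) ^ (-s)) := by
    intro n
    have h2 : (n : ℂ) + 2 ≠ 0 := by exact_mod_cast (n + 1).succ_ne_zero
    simp only [g, zetaSeriesTerm, Nat.cast_succ, add_assoc, one_add_one_eq_two]
    rw [sub_eq_add_neg (1 : ℂ) s, Complex.cpow_add _ _ h2, Complex.cpow_one]
    ring
  have hg : Tendsto g atTop (𝓝 0) := by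
    rw [tendsto_zero_iff_norm_tendsto_zero]
    have hreal : Tendsto (fun n : ℕ => ((n : ℝ) + 1) ^ (-(s.re - 1))) atTop (𝓝 0) :=
      (tendsto_rpow_neg_atTop (by linarith)).comp
        (tendsto_atTop_add_const_right _ _ tendsto_natCast_atTop_atTop)
    refine hreal.congr fun n => ?_
    simp only [g]
    rw [show ((n : ℂ) + 1) = (((n : ℝ) + 1 : ℝ) : ℂ) by push_cast; rfl,
      Complex.norm_cpow_eq_rpow_re_of_pos (by positivity)]
    simp
  have hrest := hζ'.sub (hζ.mul_left s)
  have htele := hasSum_sub_of_tendsto hg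
    (((summable_zetaSeriesTerm (by linarith)).add hrest.summable).congr fun n => by
      rw [hsplit]; ring)
  have hg0 : g 0 = 1 := by simp [g]
  rw [funext hsplit, show (s - 1) * riemannZeta s =
    (0 - g 0) - ((riemannZeta s - 1) - s * riemannZeta s) by rw [hg0]; ring]
  exact htele.sub hrest

theorem differentiable_update_sub_one_mul_riemannZeta :
    Differentiable ℂ (Function.update (fun s => (s - 1) * riemannZeta s) 1 1) := by
  set F : ℂ → ℂ := fun s => (s - 1) * riemannZeta s
  rw [← differentiableOn_univ, ← Complex.differentiableOn_compl_singleton_and_continuousAt_iff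
    (univ_mem : univ ∈ 𝓝 (1 : ℂ))]
  refine ⟨fun s ⟨_, (hs : s ≠ 1)⟩ => ?_, ?_⟩
  · have hF : Function.update F 1 1 =ᶠ[𝓝 s] F := by
      filter_upwards [eventually_ne_nhds hs] with z hz using Function.update_of_ne hz _ _
    exact (((differentiableAt_id.sub_const 1).mul (differentiableAt_riemannZeta hs)
      ).congr_of_eventuallyEq hF).differentiableWithinAt
  · rw [← continuousWithinAt_compl_self, ContinuousWithinAt, Function.update_self]
    exact riemannZeta_residue_one.congr' (eventually_nhdsWithin_of_forall fun z hz =>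
      (Function.update_of_ne hz (1 : ℂ) F).symm)

theorem tsum_zetaSeriesTerm {s : ℂ} (hs : 0 < s.re) (hs1 : s ≠ 1) :
    ∑' n, zetaSeriesTerm s n = (s - 1) * riemannZeta s := by
  have hopen : ∀ a : ℝ, IsOpen {s : ℂ | a < s.re} := fun a =>
    isOpen_lt continuous_const Complex.continuous_re
  have hagree : (fun s => ∑' n, zetaSeriesTerm s n) =ᶠ[𝓝 2]
      Function.update (fun s => (s - 1) * riemannZeta s) 1 1 := by
    filter_upwards [(hopen 1).mem_nhds (show (1 : ℝ) < (2 : ℂ).re by norm_num)]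
      with z (hz : 1 < z.re)
    have hz1 : z ≠ 1 := by rintro rfl; norm_num at hz
    rw [Function.update_of_ne hz1, (hasSum_zetaSeriesTerm hz).tsum_eq]
  have heq := AnalyticOnNhd.eqOn_of_preconnected_of_eventuallyEq
    (differentiableOn_tsum_zetaSeriesTerm.analyticOnNhd (hopen 0))
    (fun z _ => differentiable_update_sub_one_mul_riemannZeta.analyticAt z)
    (convex_halfSpace_re_gt 0).isPreconnected (show (0 : ℝ) < (2 : ℂ).re by norm_num)
    hagree hs
  rwa [Function.update_of_ne hs1] at heq

theorem riemannZeta_eq_series (s : ℂ) (hs : 0 < s.re) (hs1 : s ≠ 1) :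
    Summable (fun n : ℕ =>
        ((n : ℂ) + 1) * ((n : ℂ) + 2) ^ (-s) - ((n : ℂ) + 1) ^ ((1 : ℂ) - s)
          + s * ((n : ℂ) + 1) ^ (-s)) ∧
      riemannZeta s = (1 / (s - 1)) *
        ∑' n : ℕ, (((n : ℂ) + 1) * ((n : ℂ) + 2) ^ (-s) - ((n : ℂ) + 1) ^ ((1 : ℂ) - s)
          + s * ((n : ℂ) + 1) ^ (-s)) := by
  refine ⟨summable_zetaSeriesTerm hs, ?_⟩
  change riemannZeta s = 1 / (s - 1) * ∑' n, zetaSeriesTerm s n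
  rw [tsum_zetaSeriesTerm hs hs1, one_div, inv_mul_cancel_left₀ (sub_ne_zero.2 hs1)]
end

section
/- For every positive integer N, ∫_{−1}^0 ζ_w(N; s) ds = 1 + (N/(N+1))·( Li(N+1) − Li((N+1)²) ) + Σ_{n=1}^{N−1} n/ln(n+1), where Li(x) = ∫_0^{ln x} (e^y − 1)/y dy + ln(ln x) + γ and γ is the Euler–Mascheroni constant. -/
/-- The truncated zeta function `ζ_w(N; s)`. -/
noncomputable def zetaW (N : ℕ) (s : ℂ) : ℂ :=
  (1 / (s - 1)) * ∑ n ∈ Finset.Icc 1 N,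
    ((n : ℂ) * ((n : ℂ) + 1) ^ (-s) - (n : ℂ) ^ ((1 : ℂ) - s) + s * (n : ℂ) ^ (-s))

/-- The logarithmic integral `Li(x) = ∫_0^{ln x} (e^y - 1)/y dy + ln(ln x) + γ`. -/
noncomputable def logIntegral (x : ℝ) : ℝ :=
  (∫ y in (0 : ℝ)..(Real.log x), (Real.exp y - 1) / y)
    + Real.log (Real.log x) + Real.eulerMascheroniConstant

/-!
Telescoping the defining sum gives, for `s ≠ 1`,
`ζ_w(N; s) = N (N+1)^{-s} / (s - 1) + ∑_{n ≤ N} n^{-s}`.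
The sum integrates termwise to `1 + ∑_{n=2}^{N} (n - 1) / ln n`. In the first term the
substitution `u = (1 - s) ln (N+1)` turns `∫_{-1}^0 (N+1)^{-s} / (s - 1) ds` into
`-(N+1)⁻¹ ∫_{ln (N+1)}^{2 ln (N+1)} e^u / u du`, and
`Li(y) - Li(x) = ∫_{ln x}^{ln y} e^u / u du` because `(e^u - 1) / u = e^u / u - 1 / u`.
-/

open Real intervalIntegral MeasureTheory Finset

theorem sum_zetaW_summand_eq (N : ℕ) (s : ℂ) :
    ∑ n ∈ Icc 1 N,
        ((n : ℂ) * ((n : ℂ) + 1) ^ (-s) - (n : ℂ) ^ ((1 : ℂ) - s) + s * (n : ℂ) ^ (-s))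
      = (N : ℂ) * ((N : ℂ) + 1) ^ (-s) + (s - 1) * ∑ n ∈ Icc 1 N, (n : ℂ) ^ (-s) := by
  induction N with
  | zero => simp
  | succ N ih =>
    have hN : ((N + 1 : ℕ) : ℂ) ≠ 0 := Nat.cast_ne_zero.2 N.succ_ne_zero
    rw [sum_Icc_succ_top (by omega), sum_Icc_succ_top (by omega), ih, sub_eq_add_neg (1 : ℂ),
      Complex.cpow_add _ _ hN, Complex.cpow_one]
    push_cast
    ring

theorem zetaW_eq_of_ne_one (N : ℕ) {s : ℂ} (hs : s ≠ 1) :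
    zetaW N s
      = (N : ℂ) * ((N : ℂ) + 1) ^ (-s) / (s - 1) + ∑ n ∈ Icc 1 N, (n : ℂ) ^ (-s) := by
  have : s - 1 ≠ 0 := sub_ne_zero.2 hs
  rw [zetaW, sum_zetaW_summand_eq]
  field_simp

noncomputable def zetaWReal (N : ℕ) (s : ℝ) : ℝ :=
  N * ((N + 1) ^ (-s) / (s - 1)) + ∑ n ∈ Icc 1 N, (n : ℝ) ^ (-s)

theorem zetaW_ofReal (N : ℕ) {s : ℝ} (hs : s ≠ 1) : zetaW N s = zetaWReal N s := by
  rw [zetaW_eq_of_ne_one N (by exact_mod_cast hs), zetaWReal]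
  push_cast [Complex.ofReal_cpow (Nat.cast_nonneg _),
    Complex.ofReal_cpow (by positivity : (0 : ℝ) ≤ N + 1)]
  ring

theorem integral_rpow_neg {b : ℝ} (hb : 0 < b) (hb1 : b ≠ 1) (c d : ℝ) :
    ∫ s in c..d, b ^ (-s) = (b ^ (-c) - b ^ (-d)) / log b := by
  have hL : -log b ≠ 0 := neg_ne_zero.2 (log_ne_zero_of_pos_of_ne_one hb hb1)
  simp only [rpow_def_of_pos hb, mul_neg, ← neg_mul]
  rw [integral_comp_mul_left (fun x => exp x) hL, integral_exp, smul_eq_mul, neg_mul, neg_mul]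
  field_simp
  ring

theorem sum_integral_natCast_rpow_neg {N : ℕ} (hN : 0 < N) :
    ∑ n ∈ Icc 1 N, ∫ s in (-1 : ℝ)..0, (n : ℝ) ^ (-s)
      = 1 + ∑ n ∈ Icc 1 (N - 1), (n : ℝ) / log (n + 1) := by
  obtain ⟨M, rfl⟩ := Nat.exists_eq_add_of_lt hN
  rw [zero_add, Nat.add_sub_cancel, ← Ico_add_one_right_eq_Icc,
    sum_eq_sum_Ico_succ_bot (by omega), ← Ico_add_one_right_eq_Icc, ← sum_Ico_add']
  congr 1
  · simp
  refine sum_congr rfl fun n hn => ?_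
  have hn1 : (1 : ℝ) < (n + 1 : ℕ) := by
    have := (mem_Ico.1 hn).1
    exact_mod_cast (by omega : 1 < n + 1)
  rw [integral_rpow_neg (by linarith) hn1.ne']
  simp

theorem integral_rpow_neg_div_sub_one {b : ℝ} (hb : 0 < b) (hb1 : b ≠ 1) (c d : ℝ) :
    ∫ s in c..d, b ^ (-s) / (s - 1)
      = -b⁻¹ * ∫ u in log b * (1 - d)..log b * (1 - c), exp u / u := by
  have hL : log b ≠ 0 := log_ne_zero_of_pos_of_ne_one hb hb1
  -- both sides vanish at `s = 1`, thanks to `x / 0 = 0`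
  have hsubst : ∀ s : ℝ,
      b ^ (-s) / (s - 1) = (-log b * b⁻¹) * (exp (log b - log b * s) / (log b - log b * s)) := by
    intro s
    rcases eq_or_ne s 1 with rfl | hs
    · simp
    have : 1 - s ≠ 0 := sub_ne_zero.2 hs.symm
    rw [rpow_def_of_pos hb, show log b - log b * s = log b + log b * -s by ring, exp_add,
      exp_log hb, show s - 1 = -(1 - s) by ring, show log b + log b * -s = log b * (1 - s) by ring]
    field_simp
  simp only [hsubst]
  rw [intervalIntegral.integral_const_mul, integral_comp_sub_mul (fun u => exp u / u) hL,
    smul_eq_mul]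
  field_simp

theorem intervalIntegrable_exp_sub_one_div (a b : ℝ) :
    IntervalIntegrable (fun y => (exp y - 1) / y) volume a b := by
  have hcont : Continuous (dslope exp 0) :=
    continuousOn_univ.1 <| (continuousOn_dslope Filter.univ_mem).2
      ⟨continuous_exp.continuousOn, differentiableAt_exp⟩
  refine (hcont.intervalIntegrable a b).congr_ae (ae_restrict_of_ae ?_)
  filter_upwards [compl_mem_ae_iff.2 (measure_singleton (0 : ℝ))] with y hy
  rw [dslope_of_ne _ hy, slope_def_field, exp_zero, sub_zero]

theorem logIntegral_sub_logIntegral {x y : ℝ} (hx : 1 < x) (hy : 1 < y) :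
    logIntegral y - logIntegral x = ∫ u in log x..log y, exp u / u := by
  have hx0 : 0 < log x := log_pos hx
  have hy0 : 0 < log y := log_pos hy
  have hzero : (0 : ℝ) ∉ Set.uIcc (log x) (log y) := Set.notMem_uIcc_of_lt hx0 hy0
  have hne : ∀ u ∈ Set.uIcc (log x) (log y), u ≠ 0 := fun u hu h => hzero (h ▸ hu)
  have hexp : IntervalIntegrable (fun u => exp u / u) volume (log x) (log y) :=
    (continuous_exp.continuousOn.div continuousOn_id hne).intervalIntegrable
  have hinv : IntervalIntegrable (fun u : ℝ => 1 / u) volume (log x) (log y) :=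
    (continuousOn_const.div continuousOn_id hne).intervalIntegrable
  have hsplit : ∫ u in log x..log y, (exp u - 1) / u
      = (∫ u in log x..log y, exp u / u) - (log (log y) - log (log x)) := by
    simp only [sub_div]
    rw [intervalIntegral.integral_sub hexp hinv, integral_one_div hzero, log_div hy0.ne' hx0.ne']
  have hdiff := integral_interval_sub_left (intervalIntegrable_exp_sub_one_div 0 (log y))
    (intervalIntegrable_exp_sub_one_div 0 (log x))
  rw [logIntegral, logIntegral]
  linarith

theorem one_notMem_uIcc_neg_one_zero : (1 : ℝ) ∉ Set.uIcc (-1) 0 :=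
  Set.notMem_uIcc_of_gt (by norm_num) (by norm_num)

theorem integral_zetaWReal_neg_one_zero {N : ℕ} (hN : 0 < N) :
    ∫ s in (-1 : ℝ)..0, zetaWReal N s
      = 1 + N / (N + 1) * (logIntegral (N + 1) - logIntegral ((N + 1) ^ 2))
        + ∑ n ∈ Icc 1 (N - 1), (n : ℝ) / log (n + 1) := by
  have hb : (1 : ℝ) < N + 1 := by norm_cast; omega
  have hb0 : (0 : ℝ) < N + 1 := by linarith
  have hpole :
      IntervalIntegrable (fun s : ℝ => (N + 1 : ℝ) ^ (-s) / (s - 1)) volume (-1) 0 := by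
    refine ContinuousOn.intervalIntegrable (ContinuousOn.div ?_ (by fun_prop) fun s hs => ?_)
    · exact (continuous_const.rpow continuous_neg fun _ => Or.inl hb0.ne').continuousOn
    · rintro h
      exact one_notMem_uIcc_neg_one_zero (sub_eq_zero.1 h ▸ hs)
  have hpow : ∀ n ∈ Icc 1 N, Continuous fun s : ℝ => (n : ℝ) ^ (-s) := fun n hn =>
    continuous_const.rpow continuous_neg fun _ => Or.inl (by have := (mem_Icc.1 hn).1; positivity)
  have hLi : ∫ u in log (N + 1) * (1 - 0)..log (N + 1) * (1 - -1), exp u / u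
      = logIntegral ((N + 1) ^ 2) - logIntegral (N + 1) := by
    rw [logIntegral_sub_logIntegral hb (by nlinarith), log_pow]
    norm_num
    ring_nf
  simp only [zetaWReal]
  rw [integral_add (hpole.const_mul _) ((continuous_finsetSum _ hpow).intervalIntegrable _ _),
    intervalIntegral.integral_const_mul,
    integral_finsetSum fun n hn => (hpow n hn).intervalIntegrable _ _,
    integral_rpow_neg_div_sub_one hb0 hb.ne', sum_integral_natCast_rpow_neg hN, hLi]
  field_simp
  ring

theorem integral_zetaW_neg_one_zero (N : ℕ) (hN : 0 < N) :
    (∫ s in (-1 : ℝ)..0, zetaW N (s : ℂ)) =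
      1 + ((N : ℂ) / ((N : ℂ) + 1)) *
          ((logIntegral ((N : ℝ) + 1) : ℂ) - (logIntegral (((N : ℝ) + 1) ^ 2) : ℂ))
        + ∑ n ∈ Finset.Icc 1 (N - 1), (n : ℂ) / (Real.log ((n : ℝ) + 1) : ℂ) := by
  have hreal :
      Set.EqOn (fun s : ℝ => zetaW N s) (fun s => (zetaWReal N s : ℂ)) (Set.uIcc (-1) 0) :=
    fun s hs => zetaW_ofReal N fun h => one_notMem_uIcc_neg_one_zero (h ▸ hs)
  rw [integral_congr hreal, integral_ofReal, integral_zetaWReal_neg_one_zero hN]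
  push_cast
  rfl
end

section
/- For every positive integer N and every real t ≠ 0, ∫_0^1 ζ_w(N; c + i·t) dc = 1 + (N/(N+1))·( Ei₁(i·t·ln(N+1) − ln(N+1)) − Ei₁(i·t·ln(N+1)) ) + Σ_{n=1}^{N−1} n·(n+1)^{−i·t} / ((n+1)·ln(n+1)), where Ei₁(z) = z·∫_0^1 ∫_0^1 e^{−z·x·y} dy dx − γ − log z with log the principal branch of the complex logarithm and γ the Euler–Mascheroni constant. -/
open Complex in
/-- The exponential integral `Ei₁(z) = z·∫_0^1∫_0^1 e^{-zxy} dy dx - γ - log z`. -/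
noncomputable def expIntegralE1 (z : ℂ) : ℂ :=
  z * (∫ x in (0 : ℝ)..1, ∫ y in (0 : ℝ)..1, Complex.exp (-z * x * y))
    - (Real.eulerMascheroniConstant : ℂ) - Complex.log z

open Complex intervalIntegral

theorem Finset.sum_Icc_one_eq_add_sum_Icc_succ {M : Type*} [AddCommMonoid M] (f : ℕ → M) {n : ℕ}
    (hn : 0 < n) : ∑ i ∈ Finset.Icc 1 n, f i = f 1 + ∑ i ∈ Finset.Icc 1 (n - 1), f (i + 1) := by
  obtain ⟨n, rfl⟩ := Nat.exists_eq_add_one_of_ne_zero hn.ne'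
  rw [Nat.add_sub_cancel]
  clear hn
  induction n with
  | zero => simp
  | succ n ih =>
    rw [Finset.sum_Icc_succ_top (by omega), ih, Finset.sum_Icc_succ_top (by omega), add_assoc]

theorem mul_integral_cexp_mul (w : ℂ) : w * ∫ x in (0 : ℝ)..1, exp (w * x) = exp w - 1 := by
  rcases eq_or_ne w 0 with rfl | hw
  · simp
  · rw [integral_exp_mul_complex hw]
    field_simp
    simp

theorem Complex.log_neg_sub_log_eq_of_im_eq {z w : ℂ} (hz : z.im ≠ 0) (h : z.im = w.im) :
    log (-z) - log z = log (-w) - log w := by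
  rcases hz.lt_or_gt with hz | hz
  · apply Complex.ext
    · simp [log_re]
    · simp [log_im, arg_neg_eq_arg_add_pi_of_im_neg hz, arg_neg_eq_arg_add_pi_of_im_neg (h ▸ hz)]
  · apply Complex.ext
    · simp [log_re]
    · simp [log_im, arg_neg_eq_arg_sub_pi_of_im_pos hz, arg_neg_eq_arg_sub_pi_of_im_pos (h ▸ hz)]

theorem Complex.ofReal_cpow_eq_exp {x : ℝ} (hx : 0 < x) (z : ℂ) :
    (x : ℂ) ^ z = exp (Real.log x * z) := by
  rw [cpow_def_of_ne_zero (ofReal_ne_zero.2 hx.ne'), ofReal_log hx.le]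

theorem Complex.exp_neg_ofReal_log {x : ℝ} (hx : 0 < x) : exp (-Real.log x) = (x : ℂ)⁻¹ := by
  rw [← ofReal_neg, ← ofReal_exp, Real.exp_neg, Real.exp_log hx, ofReal_inv]

theorem Complex.ofReal_mul_ofReal_sub_ne_zero {a : ℂ} (ha : a.im ≠ 0) (v L : ℝ) :
    (v * L - a : ℂ) ≠ 0 :=
  fun h => ha (by simpa using congrArg im h)

/-- The entire function `Ein z = ∫₀^z (1 - e^{-t}) / t dt`, so that
`expIntegralE1 z = ein z - γ - log z`. -/
noncomputable def ein (z : ℂ) : ℂ :=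
  z * ∫ x in (0 : ℝ)..1, ∫ y in (0 : ℝ)..1, exp (-z * x * y)

theorem expIntegralE1_eq_ein (z : ℂ) :
    expIntegralE1 z = ein z - Real.eulerMascheroniConstant - log z := rfl

theorem mul_integral_cexp_neg_mul_mul (z : ℂ) {x : ℝ} (hx : x ≠ 0) :
    z * ∫ y in (0 : ℝ)..1, exp (-z * x * y) = (1 - exp (-z * x)) / x := by
  have h := mul_integral_cexp_mul (-z * x)
  rw [eq_div_iff (ofReal_ne_zero.mpr hx)]
  linear_combination -h

theorem continuous_mul_integral_cexp_neg_mul_mul (z : ℂ) :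
    Continuous fun x : ℝ => z * ∫ y in (0 : ℝ)..1, exp (-z * x * y) :=
  continuous_const.mul <| continuous_parametric_intervalIntegral_of_continuous' (by fun_prop) 0 1

theorem ein_sub_ein (a : ℂ) (L : ℝ) :
    ein (a - L) - ein a = ∫ x in (0 : ℝ)..1, ∫ v in (0 : ℝ)..1, -(L * exp ((v * L - a) * x)) := by
  rw [ein, ein, ← integral_const_mul, ← integral_const_mul,
    ← integral_sub ((continuous_mul_integral_cexp_neg_mul_mul _).intervalIntegrable 0 1)
      ((continuous_mul_integral_cexp_neg_mul_mul _).intervalIntegrable 0 1)]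
  refine integral_congr_ae (Filter.Eventually.of_forall fun x hx => ?_)
  replace hx : x ≠ 0 := (Set.uIoc_of_le (zero_le_one (α := ℝ)) ▸ hx).1.ne'
  have hexp : ∀ v : ℝ, exp ((v * L - a) * x) = exp (-a * x) * exp (L * x * v) := fun v => by
    rw [← exp_add]; ring_nf
  have hshift : exp (-(a - L) * x) = exp (-a * x) * exp (L * x) := by
    rw [← exp_add]; ring_nf
  simp_rw [hexp, show ∀ v : ℝ, -(L * (exp (-a * x) * exp (L * x * v)))
    = -(L * exp (-a * x)) * exp (L * x * v) from fun v => by ring]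
  rw [mul_integral_cexp_neg_mul_mul _ hx, mul_integral_cexp_neg_mul_mul _ hx, integral_const_mul,
    div_sub_div_same, div_eq_iff (ofReal_ne_zero.mpr hx)]
  linear_combination exp (-a * x) * mul_integral_cexp_mul (L * x) - hshift

theorem ein_sub_ein_eq_integral {a : ℂ} (ha : a.im ≠ 0) (L : ℝ) :
    ein (a - L) - ein a = ∫ v in (0 : ℝ)..1, L * (1 - exp (v * L - a)) / (v * L - a) := by
  have hcont : Continuous (Function.uncurry fun x v : ℝ => -(L * exp ((v * L - a) * x))) := by
    fun_prop
  rw [ein_sub_ein, MeasureTheory.intervalIntegral_intervalIntegral_swap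
    ((hcont.continuousOn.integrableOn_compact (isCompact_uIcc.prod isCompact_uIcc)).mono_set
      (Set.prod_mono Set.uIoc_subset_uIcc Set.uIoc_subset_uIcc))]
  refine integral_congr fun v _ => ?_
  rw [integral_neg, integral_const_mul, eq_div_iff (ofReal_mul_ofReal_sub_ne_zero ha v L)]
  linear_combination -L * mul_integral_cexp_mul (v * L - a)

theorem integral_div_mul_sub_eq_log {a : ℂ} (ha : a.im ≠ 0) (L : ℝ) :
    ∫ v in (0 : ℝ)..1, L / (v * L - a) = log (L - a) - log (-a) := by
  have hderiv : ∀ v : ℝ, HasDerivAt (fun v : ℝ => log (v * L - a)) (L / (v * L - a)) v := by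
    intro v
    have hslit : (v * L - a : ℂ) ∈ slitPlane := mem_slitPlane_iff.2 (.inr (by simpa using ha))
    simpa using (((hasDerivAt_id v).ofReal_comp.mul_const (L : ℂ)).sub_const a).clog_real hslit
  have hint : IntervalIntegrable (fun v : ℝ => (L : ℂ) / (v * L - a)) MeasureTheory.volume 0 1 :=
    (continuous_const.div (by fun_prop) (ofReal_mul_ofReal_sub_ne_zero ha · L)).intervalIntegrable 0 1
  rw [integral_eq_sub_of_hasDerivAt (fun v _ => hderiv v) hint]
  simp

theorem expIntegralE1_sub_ofReal_sub_expIntegralE1 {a : ℂ} (ha : a.im ≠ 0) (L : ℝ) :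
    expIntegralE1 (a - L) - expIntegralE1 a
      = ∫ u in (0 : ℝ)..1, L * exp (u * L - a) / (a - u * L) := by
  have hsplit : ∀ v : ℝ, L * (1 - exp (v * L - a)) / (v * L - a)
      = L / (v * L - a) + L * exp (v * L - a) / (a - v * L) := fun v => by
    rw [← neg_sub (v * L : ℂ), div_neg]; ring
  have hlog := log_neg_sub_log_eq_of_im_eq (z := a - L) (w := a) (by simpa using ha) (by simp)
  rw [neg_sub] at hlog
  have hne : ∀ v : ℝ, (v * L - a : ℂ) ≠ 0 := (ofReal_mul_ofReal_sub_ne_zero ha · L)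
  have hint₁ : IntervalIntegrable (fun v : ℝ => (L : ℂ) / (v * L - a)) MeasureTheory.volume 0 1 :=
    (continuous_const.div (by fun_prop) hne).intervalIntegrable 0 1
  have hint₂ : IntervalIntegrable (fun v : ℝ => L * exp (v * L - a) / (a - v * L))
      MeasureTheory.volume 0 1 :=
    (Continuous.div (by fun_prop) (by fun_prop) fun v => sub_ne_zero.2 (sub_ne_zero.1 (hne v)).symm)
      |>.intervalIntegrable 0 1
  have hein := ein_sub_ein_eq_integral ha L
  rw [integral_congr fun v _ => hsplit v, integral_add hint₁ hint₂, integral_div_mul_sub_eq_log ha]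
    at hein
  rw [expIntegralE1_eq_ein, expIntegralE1_eq_ein]
  linear_combination hein + hlog

theorem sum_zetaW_summand (N : ℕ) (s : ℂ) :
    ∑ n ∈ Finset.Icc 1 N,
        ((n : ℂ) * ((n : ℂ) + 1) ^ (-s) - (n : ℂ) ^ ((1 : ℂ) - s) + s * (n : ℂ) ^ (-s))
      = (s - 1) * ∑ n ∈ Finset.Icc 1 N, (n : ℂ) ^ (-s) + N * ((N : ℂ) + 1) ^ (-s) := by
  induction N with
  | zero => simp
  | succ N ih =>
    have hpow : ((N : ℂ) + 1) ^ (1 - s) = ((N : ℂ) + 1) * ((N : ℂ) + 1) ^ (-s) := by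
      rw [sub_eq_add_neg, cpow_add _ _ (Nat.cast_add_one_ne_zero N), cpow_one]
    rw [Finset.sum_Icc_succ_top (by omega), Finset.sum_Icc_succ_top (by omega), ih]
    push_cast
    rw [hpow]
    ring

theorem zetaW_eq_sum_add (N : ℕ) {s : ℂ} (hs : s ≠ 1) :
    zetaW N s = ∑ n ∈ Finset.Icc 1 N, (n : ℂ) ^ (-s) + N * (((N : ℂ) + 1) ^ (-s) / (s - 1)) := by
  rw [zetaW, sum_zetaW_summand]
  field_simp [sub_ne_zero.2 hs]

theorem integral_ofReal_cpow_neg_add {x : ℝ} (hx₀ : 0 < x) (hx₁ : x ≠ 1) (w : ℂ) :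
    ∫ c in (0 : ℝ)..1, (x : ℂ) ^ (-(c + w)) = (1 - (x : ℂ)⁻¹) * (x : ℂ) ^ (-w) / Real.log x := by
  have hL : (Real.log x : ℂ) ≠ 0 := ofReal_ne_zero.2 (Real.log_ne_zero_of_pos_of_ne_one hx₀ hx₁)
  have hsplit : ∀ c : ℝ,
      exp (Real.log x * -(c + w)) = exp (Real.log x * -w) * exp (-Real.log x * c) :=
    fun c => by rw [← exp_add]; ring_nf
  simp_rw [ofReal_cpow_eq_exp hx₀, hsplit]
  rw [integral_const_mul, eq_div_iff hL]
  linear_combination (-exp (Real.log x * -w)) * mul_integral_cexp_mul (-Real.log x)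
    - exp (Real.log x * -w) * exp_neg_ofReal_log hx₀

theorem integral_natCast_add_one_cpow_neg_add {m : ℕ} (hm : m ≠ 0) (w : ℂ) :
    ∫ c in (0 : ℝ)..1, ((m + 1 : ℕ) : ℂ) ^ (-(c + w))
      = m * ((m : ℂ) + 1) ^ (-w) / (((m : ℂ) + 1) * Real.log ((m : ℝ) + 1)) := by
  have h := integral_ofReal_cpow_neg_add (x := (m : ℝ) + 1) (by positivity) (by simpa using hm) w
  push_cast at h ⊢
  rw [h]
  field_simp
  ring

theorem integral_ofReal_cpow_div_sub_one {x : ℝ} (hx₀ : 0 < x) (hx₁ : x ≠ 1) {t : ℝ} (ht : t ≠ 0) :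
    ∫ c in (0 : ℝ)..1, (x : ℂ) ^ (-(c + I * t)) / (c + I * t - 1)
      = (x : ℂ)⁻¹ * (expIntegralE1 (I * t * Real.log x - Real.log x)
          - expIntegralE1 (I * t * Real.log x)) := by
  have hlog : Real.log x ≠ 0 := Real.log_ne_zero_of_pos_of_ne_one hx₀ hx₁
  have hreflect := integral_comp_sub_left (a := 0) (b := 1)
    (fun c : ℝ => (x : ℂ) ^ (-(c + I * t)) / (c + I * t - 1)) 1
  rw [sub_self, sub_zero] at hreflect
  rw [expIntegralE1_sub_ofReal_sub_expIntegralE1 (by simpa using mul_ne_zero ht hlog),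
    ← integral_const_mul, ← hreflect]
  refine integral_congr fun u _ => ?_
  have hexp : exp (Real.log x * -((1 - u) + I * t))
      = exp (u * Real.log x - I * t * Real.log x) * (x : ℂ)⁻¹ := by
    rw [← exp_neg_ofReal_log hx₀, ← exp_add]; ring_nf
  push_cast
  rw [ofReal_cpow_eq_exp hx₀, hexp,
    show I * t * Real.log x - u * Real.log x = Real.log x * (I * t - u) by ring,
    mul_div_mul_left _ _ (ofReal_ne_zero.2 hlog)]
  ring

open Complex in
theorem integral_zetaW_critical_strip (N : ℕ) (hN : 0 < N) (t : ℝ) (ht : t ≠ 0) :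
    (∫ c in (0 : ℝ)..1, zetaW N ((c : ℂ) + I * t)) =
      1 + ((N : ℂ) / ((N : ℂ) + 1)) *
          (expIntegralE1 (I * t * (Real.log ((N : ℝ) + 1) : ℂ) - (Real.log ((N : ℝ) + 1) : ℂ))
            - expIntegralE1 (I * t * (Real.log ((N : ℝ) + 1) : ℂ)))
        + ∑ n ∈ Finset.Icc 1 (N - 1),
            (n : ℂ) * ((n : ℂ) + 1) ^ (-(I * t)) /
              (((n : ℂ) + 1) * (Real.log ((n : ℝ) + 1) : ℂ)) := by
  have hs : ∀ c : ℝ, (c : ℂ) + I * t ≠ 1 := fun c h => ht (by simpa using congrArg im h)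
  have hpow : ∀ n ∈ Finset.Icc 1 N, Continuous fun c : ℝ => (n : ℂ) ^ (-(c + I * t)) :=
    fun n hn => .const_cpow (by fun_prop)
      (.inl (Nat.cast_ne_zero.2 (Nat.one_le_iff_ne_zero.1 (Finset.mem_Icc.1 hn).1)))
  have hquot : IntervalIntegrable (fun c : ℝ => ((N : ℂ) + 1) ^ (-(c + I * t)) / (c + I * t - 1))
      MeasureTheory.volume 0 1 :=
    (Continuous.div (.const_cpow (by fun_prop) (.inl (Nat.cast_add_one_ne_zero N))) (by fun_prop)
      fun c => sub_ne_zero.2 (hs c)).intervalIntegrable 0 1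
  have hlast := integral_ofReal_cpow_div_sub_one (x := (N : ℝ) + 1) (by positivity)
    (by simpa using hN.ne') ht
  push_cast at hlast
  rw [integral_congr fun c _ => zetaW_eq_sum_add N (hs c),
    integral_add ((continuous_finsetSum _ hpow).intervalIntegrable 0 1) (hquot.const_mul _),
    integral_finsetSum fun n hn => (hpow n hn).intervalIntegrable 0 1, integral_const_mul,
    Finset.sum_Icc_one_eq_add_sum_Icc_succ _ hN, Finset.sum_congr rfl fun m hm =>
      integral_natCast_add_one_cpow_neg_add (Nat.one_le_iff_ne_zero.1 (Finset.mem_Icc.1 hm).1) _,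
    hlast]
  simp only [Nat.cast_one, one_cpow, integral_const, sub_zero, one_smul]
  ring
end

section
/- For every positive integer N, the truncated zeta function has a simple pole at s = 1 with residue N/(N+1): lim_{s→1} (s−1)·ζ_w(N; s) = N/(N+1), where s ranges over complex numbers different from 1. -/
/-!
Away from `s = 1`, `(s - 1) ζ_w(N; s)` is the finite sum in the definition, an entire function
of `s`, so the limit is its value at `s = 1`. There the `n`-th term is
`n/(n+1) - 1 + 1/n = 1/n - 1/(n+1)`, and the sum telescopes to `1 - 1/(N+1) = N/(N+1)`.
-/

open Filter Topology

noncomputable def zetaWNumerator (N : ℕ) (s : ℂ) : ℂ :=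
  ∑ n ∈ Finset.Icc 1 N,
    ((n : ℂ) * ((n : ℂ) + 1) ^ (-s) - (n : ℂ) ^ ((1 : ℂ) - s) + s * (n : ℂ) ^ (-s))

lemma sub_one_mul_zetaW (N : ℕ) {s : ℂ} (hs : s ≠ 1) :
    (s - 1) * zetaW N s = zetaWNumerator N s := by
  rw [zetaW, zetaWNumerator, ← mul_assoc, mul_one_div_cancel (sub_ne_zero.mpr hs), one_mul]

lemma continuous_zetaWNumerator (N : ℕ) : Continuous (zetaWNumerator N) := by
  refine continuous_finsetSum _ fun n hn => ?_
  have hn₀ : (n : ℂ) ≠ 0 := Nat.cast_ne_zero.mpr (Nat.one_le_iff_ne_zero.mp (Finset.mem_Icc.mp hn).1)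
  have hn₁ : (n : ℂ) + 1 ≠ 0 := by exact_mod_cast n.succ_ne_zero
  exact ((continuous_const.mul (continuous_neg.const_cpow (Or.inl hn₁))).sub
    ((continuous_const.sub continuous_id).const_cpow (Or.inl hn₀))).add
    (continuous_id.mul (continuous_neg.const_cpow (Or.inl hn₀)))

lemma sum_Icc_inv_sub_inv_succ (N : ℕ) :
    ∑ n ∈ Finset.Icc 1 N, ((n : ℂ)⁻¹ - ((n : ℂ) + 1)⁻¹) = (N : ℂ) / ((N : ℂ) + 1) := by
  induction N with
  | zero => simp
  | succ N ih =>
    rw [Finset.sum_Icc_succ_top (Nat.succ_pos N), ih]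
    have h₁ : (N : ℂ) + 1 ≠ 0 := by exact_mod_cast N.succ_ne_zero
    have h₂ : (N : ℂ) + 1 + 1 ≠ 0 := by exact_mod_cast (N + 1).succ_ne_zero
    push_cast
    field_simp
    ring

lemma zetaWNumerator_one (N : ℕ) : zetaWNumerator N 1 = (N : ℂ) / ((N : ℂ) + 1) := by
  rw [zetaWNumerator, ← sum_Icc_inv_sub_inv_succ]
  refine Finset.sum_congr rfl fun n _ => ?_
  have h₁ : (n : ℂ) + 1 ≠ 0 := by exact_mod_cast n.succ_ne_zero
  rw [sub_self, Complex.cpow_zero, Complex.cpow_neg_one, Complex.cpow_neg_one]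
  field_simp
  ring

theorem zetaW_residue_at_one_general (N : ℕ) :
    Filter.Tendsto (fun s : ℂ => (s - 1) * zetaW N s)
      (nhdsWithin 1 {(1 : ℂ)}ᶜ) (nhds ((N : ℂ) / ((N : ℂ) + 1))) := by
  have hlim : Tendsto (zetaWNumerator N) (𝓝[≠] 1) (𝓝 ((N : ℂ) / ((N : ℂ) + 1))) := by
    rw [← zetaWNumerator_one]
    exact (continuous_zetaWNumerator N).continuousAt.tendsto.mono_left nhdsWithin_le_nhds
  refine hlim.congr' ?_
  filter_upwards [self_mem_nhdsWithin] with s hs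
  exact (sub_one_mul_zetaW N hs).symm

theorem zetaW_residue_at_one (N : ℕ) (hN : 0 < N) :
    Filter.Tendsto (fun s : ℂ => (s - 1) * zetaW N s)
      (nhdsWithin 1 {(1 : ℂ)}ᶜ) (nhds ((N : ℂ) / ((N : ℂ) + 1))) :=
  zetaW_residue_at_one_general N
end

section
/- For every positive integer N, the derivative of the truncated zeta function at s = 0 equals a(N) − N, where a(N) = Σ_{n=1}^N n·(ln(n+1) − ln(n)); that is, d/ds ζ_w(N; s) |_{s=0} = Σ_{n=1}^N n·(ln(n+1) − ln(n)) − N. -/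
/-!
Every summand `n (n+1)^{-s} - n^{1-s} + s n^{-s}` vanishes at `s = 0`, so in the product rule
for `ζ_w(N; s)` the derivative of the prefactor `1/(s-1)` drops out and only its value `-1` at `0`
survives.
-/

open Complex

theorem HasDerivAt.fun_mul_of_apply_eq_zero {𝕜 : Type*} [NontriviallyNormedField 𝕜]
    {f g : 𝕜 → 𝕜} {f' g' a : 𝕜} (hf : HasDerivAt f f' a) (hg : HasDerivAt g g' a)
    (hga : g a = 0) : HasDerivAt (fun s => f s * g s) (f a * g') a := by
  simpa [hga] using hf.fun_mul hg

theorem hasDerivAt_inv_sub_one_at_zero : HasDerivAt (fun s : ℂ => 1 / (s - 1)) (-1) 0 := by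
  simpa [one_div] using ((hasDerivAt_id (0 : ℂ)).sub_const 1).fun_inv (by norm_num)

theorem hasDerivAt_cpow_neg_at_zero {x : ℂ} (hx : x ≠ 0) :
    HasDerivAt (fun s : ℂ => x ^ (-s)) (-log x) 0 := by
  simpa using (hasDerivAt_neg (0 : ℂ)).const_cpow (c := x) (Or.inl hx)

theorem hasDerivAt_zetaW_summand_at_zero {x : ℂ} (hx : x ≠ 0) (hx₁ : x + 1 ≠ 0) :
    HasDerivAt (fun s : ℂ => x * (x + 1) ^ (-s) - x ^ ((1 : ℂ) - s) + s * x ^ (-s))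
      (1 - x * (log (x + 1) - log x)) 0 := by
  have hshift : HasDerivAt (fun s : ℂ => x ^ ((1 : ℂ) - s)) (-(x * log x)) 0 := by
    simpa using ((hasDerivAt_id (0 : ℂ)).const_sub 1).const_cpow (c := x) (Or.inl hx)
  have hlin : HasDerivAt (fun s : ℂ => s * x ^ (-s)) 1 0 := by
    simpa using (hasDerivAt_id (0 : ℂ)).fun_mul (hasDerivAt_cpow_neg_at_zero hx)
  refine ((((hasDerivAt_cpow_neg_at_zero hx₁).const_mul x).fun_sub hshift).fun_add
    hlin).congr_deriv ?_
  ring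

theorem deriv_zetaW_at_zero_general (N : ℕ) :
    deriv (zetaW N) 0 =
      ((∑ n ∈ Finset.Icc 1 N,
          (n : ℝ) * (Real.log ((n : ℝ) + 1) - Real.log (n : ℝ)) : ℝ) : ℂ) - (N : ℂ) := by
  have hsum := HasDerivAt.fun_sum (u := Finset.Icc 1 N) fun n hn =>
    hasDerivAt_zetaW_summand_at_zero (x := (n : ℂ))
      (Nat.cast_ne_zero.mpr (Nat.one_le_iff_ne_zero.mp (Finset.mem_Icc.mp hn).1))
      (Nat.cast_add_one_ne_zero n)
  have hzeta : HasDerivAt (zetaW N) _ 0 :=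
    hasDerivAt_inv_sub_one_at_zero.fun_mul_of_apply_eq_zero hsum
      (Finset.sum_eq_zero fun n _ => by simp)
  rw [hzeta.deriv]
  push_cast [natCast_log, ← Nat.cast_succ]
  simp [Finset.sum_sub_distrib]

theorem deriv_zetaW_at_zero (N : ℕ) (hN : 0 < N) :
    deriv (zetaW N) 0 =
      ((∑ n ∈ Finset.Icc 1 N,
          (n : ℝ) * (Real.log ((n : ℝ) + 1) - Real.log (n : ℝ)) : ℝ) : ℂ) - (N : ℂ) :=
  deriv_zetaW_at_zero_general N
end

section
/- For every positive integer N, the reflection function tends to 0 both at s = 1 and at s = 2: lim_{s→1} χ(N; s) = 0 and lim_{s→2} χ(N; s) = 0, where s ranges over complex numbers at which χ(N; s) is defined. -/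
/-- The reflection function `χ(N; s) = ζ_w(N; 1-s) / ζ_w(N; s)`. -/
noncomputable def chiW (N : ℕ) (s : ℂ) : ℂ := zetaW N (1 - s) / zetaW N s

/-!
Writing `ζ_w(N; s) = S(s) / (s - 1)` with `S` the (continuous) finite sum, one has
`χ(N; s) = (s - 1) S(1 - s) / (-s S(s))` identically. Near `s = 1` the factor `s - 1` vanishes
while `S(1) = ∑ 1 / (n (n + 1)) > 0`; near `s = 2` the numerator vanishes because every term of
`S(-1)` is `n (n + 1) - n² - n = 0`, while `S(2) = ∑ (3n + 2) / (n² (n + 1)²) > 0`.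
-/

open Filter Topology Finset

theorem sum_Icc_one_pos {N : ℕ} (hN : 0 < N) {f : ℕ → ℝ} (hf : ∀ n, 1 ≤ n → 0 < f n) :
    0 < ∑ n ∈ Icc 1 N, f n :=
  sum_pos (fun n hn => hf n (mem_Icc.mp hn).1) ⟨1, mem_Icc.mpr ⟨le_rfl, hN⟩⟩

namespace ZetaW

noncomputable def sum (N : ℕ) (s : ℂ) : ℂ :=
  ∑ n ∈ Icc 1 N,
    ((n : ℂ) * ((n : ℂ) + 1) ^ (-s) - (n : ℂ) ^ ((1 : ℂ) - s) + s * (n : ℂ) ^ (-s))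

variable (N : ℕ)

theorem continuous_sum : Continuous (sum N) := by
  refine continuous_finsetSum _ fun n hn => ?_
  have hn0 : (n : ℂ) ≠ 0 := Nat.cast_ne_zero.mpr (by grind)
  have hn1 : (n : ℂ) + 1 ≠ 0 := by exact_mod_cast n.succ_ne_zero
  exact ((continuous_neg.const_cpow (.inl hn1)).const_mul _).sub
    ((continuous_sub_left 1).const_cpow (.inl hn0)) |>.add
    (continuous_id.mul (continuous_neg.const_cpow (.inl hn0)))

theorem sum_intCast (k : ℤ) :
    sum N k = ∑ n ∈ Icc 1 N,
      ((n : ℂ) * ((n : ℂ) + 1) ^ (-k) - (n : ℂ) ^ (1 - k) + k * (n : ℂ) ^ (-k)) := by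
  refine sum_congr rfl fun n _ => ?_
  rw [← Int.cast_neg, Complex.cpow_intCast, Complex.cpow_intCast, ← Int.cast_one,
    ← Int.cast_sub, Complex.cpow_intCast]

theorem sum_neg_one : sum N (-1) = 0 := by
  have h := sum_intCast N (-1)
  push_cast at h
  rw [h]
  refine sum_eq_zero fun n _ => ?_
  norm_num
  ring

theorem sum_one : sum N 1 = ((∑ n ∈ Icc 1 N, 1 / (n * (n + 1) : ℝ) : ℝ) : ℂ) := by
  have h := sum_intCast N 1
  push_cast at h ⊢
  rw [h]
  refine sum_congr rfl fun n hn => ?_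
  have hn0 : (n : ℂ) ≠ 0 := Nat.cast_ne_zero.mpr (by grind)
  have hn1 : (n : ℂ) + 1 ≠ 0 := by exact_mod_cast n.succ_ne_zero
  field_simp
  ring

theorem sum_two :
    sum N 2 = ((∑ n ∈ Icc 1 N, (3 * n + 2) / (n ^ 2 * (n + 1) ^ 2 : ℝ) : ℝ) : ℂ) := by
  have h := sum_intCast N 2
  push_cast at h ⊢
  rw [h]
  refine sum_congr rfl fun n hn => ?_
  have hn0 : (n : ℂ) ≠ 0 := Nat.cast_ne_zero.mpr (by grind)
  have hn1 : (n : ℂ) + 1 ≠ 0 := by exact_mod_cast n.succ_ne_zero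
  field_simp
  ring

variable {N}

theorem sum_one_ne_zero (hN : 0 < N) : sum N 1 ≠ 0 := by
  rw [sum_one]
  exact_mod_cast (sum_Icc_one_pos hN fun n _ => by positivity).ne'

theorem sum_two_ne_zero (hN : 0 < N) : sum N 2 ≠ 0 := by
  rw [sum_two]
  exact_mod_cast (sum_Icc_one_pos hN fun n _ => by positivity).ne'

end ZetaW

theorem zetaW_eq (N : ℕ) (s : ℂ) : zetaW N s = (s - 1)⁻¹ * ZetaW.sum N s := by
  rw [zetaW, one_div, ZetaW.sum]

-- No case split on `s = 0` or `s = 1` is needed: `(a * b)⁻¹ = a⁻¹ * b⁻¹` holds in any field.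
theorem chiW_eq (N : ℕ) (s : ℂ) :
    chiW N s = (s - 1) * ZetaW.sum N (1 - s) / (-s * ZetaW.sum N s) := by
  rw [chiW, zetaW_eq, zetaW_eq, sub_sub_cancel_left]
  simp only [div_eq_mul_inv, mul_inv, inv_inv]
  ring

theorem tendsto_chiW_nhds_zero {N : ℕ} {a : ℂ} (ha : a ≠ 0) (hS : ZetaW.sum N a ≠ 0)
    (hnum : (a - 1) * ZetaW.sum N (1 - a) = 0) : Tendsto (chiW N) (𝓝 a) (𝓝 0) := by
  have hsum := ZetaW.continuous_sum N
  have hcont : ContinuousAt (fun s => (s - 1) * ZetaW.sum N (1 - s) / (-s * ZetaW.sum N s)) a :=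
    ((continuous_sub_right 1).mul (hsum.comp (continuous_sub_left 1))).continuousAt.div
      (continuous_neg.mul hsum).continuousAt (mul_ne_zero (neg_ne_zero.mpr ha) hS)
  simpa [funext (chiW_eq N), hnum] using hcont.tendsto

theorem chiW_tendsto_zero_at_one_and_two (N : ℕ) (hN : 0 < N) :
    Filter.Tendsto (chiW N)
        (nhdsWithin 1 {s : ℂ | s ≠ 0 ∧ s ≠ 1 ∧ zetaW N s ≠ 0}) (nhds 0) ∧
      Filter.Tendsto (chiW N)
        (nhdsWithin 2 {s : ℂ | s ≠ 0 ∧ s ≠ 1 ∧ zetaW N s ≠ 0}) (nhds 0) := by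
  have at_one : Tendsto (chiW N) (𝓝 1) (𝓝 0) :=
    tendsto_chiW_nhds_zero one_ne_zero (ZetaW.sum_one_ne_zero hN) (by rw [sub_self, zero_mul])
  have at_two : Tendsto (chiW N) (𝓝 2) (𝓝 0) :=
    tendsto_chiW_nhds_zero two_ne_zero (ZetaW.sum_two_ne_zero hN)
      (by rw [show (1 : ℂ) - 2 = -1 by norm_num, ZetaW.sum_neg_one, mul_zero])
  exact ⟨at_one.mono_left nhdsWithin_le_nhds, at_two.mono_left nhdsWithin_le_nhds⟩
end

section
/- For every positive integer N, the residue at s = 2 of the reciprocal reflection function χ(N; s)^{−1} = ζ_w(N; s)/ζ_w(N; 1−s) is given by lim_{s→2} (s−2)·ζ_w(N; s)/ζ_w(N; 1−s) = ( 2N/(N+1)² − 2·Σ_{k=N+1}^∞ k^{−2} + 2·ζ(2) ) / ( (N+1)²/2 − N/2 − 1/2 − Σ_{n=1}^N n·(n+1)·(ln(n+1) − ln(n)) ). -/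
open Finset Filter Topology Complex

theorem HasDerivAt.tendsto_sub_mul_div_of_eq_zero {𝕜 : Type*} [NontriviallyNormedField 𝕜]
    {f g : 𝕜 → 𝕜} {a g' : 𝕜} (hg : HasDerivAt g g' a) (hga : g a = 0) (hg' : g' ≠ 0)
    (hf : ContinuousAt f a) :
    Tendsto (fun s => (s - a) * f s / g s) (𝓝[≠] a) (𝓝 (f a / g')) := by
  rw [div_eq_mul_inv]
  refine (hf.continuousWithinAt.tendsto.mul
    ((hasDerivAt_iff_tendsto_slope.mp hg).inv₀ hg')).congr fun s => ?_
  rw [slope_def_field, hga, sub_zero, inv_div]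
  ring

theorem sum_Icc_natCast_mul_two {R : Type*} [CommSemiring R] (N : ℕ) :
    (∑ n ∈ Icc 1 N, (n : R)) * 2 = N * (N + 1) := by
  induction N with
  | zero => simp
  | succ N ih =>
    rw [sum_Icc_succ_top (by omega), add_mul, ih]
    push_cast
    ring

theorem Real.lt_mul_mul_log_add_one_sub_log {x : ℝ} (hx : 0 < x) :
    x < x * (x + 1) * (log (x + 1) - log x) := by
  have hx1 : 0 < x + 1 := by linarith
  have hlog : log (x / (x + 1)) < x / (x + 1) - 1 :=
    log_lt_sub_one_of_pos (by positivity) (by rw [ne_eq, div_eq_one_iff_eq hx1.ne']; linarith)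
  rw [log_div hx.ne' hx1.ne', div_sub_one hx1.ne', show x - (x + 1) = -1 by ring, neg_div] at hlog
  calc x = x * (x + 1) * (1 / (x + 1)) := by field_simp
    _ < x * (x + 1) * (log (x + 1) - log x) := by gcongr; linarith

theorem tsum_one_div_add_pow_eq_riemannZeta_sub {k : ℕ} (N : ℕ) (hk : 1 < k) :
    ∑' m : ℕ, 1 / ((m : ℂ) + N + 1) ^ k = riemannZeta k - ∑ n ∈ Icc 1 N, 1 / (n : ℂ) ^ k := by
  have hsum : Summable fun n : ℕ => 1 / (n : ℂ) ^ k := by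
    simpa [cpow_natCast] using (Complex.summable_one_div_nat_cpow (p := k)).mpr (by simpa)
  rw [zeta_nat_eq_tsum_of_gt_one hk, ← hsum.sum_add_tsum_nat_add (N + 1), range_eq_Ico,
    sum_eq_sum_Ico_succ_bot (by omega : 0 < N + 1), Finset.Ico_add_one_right_eq_Icc]
  simp [zero_pow (by omega : k ≠ 0), add_assoc]

theorem sum_sub_mul_log_add_one_sub_log_neg {N : ℕ} (hN : 0 < N) :
    ∑ n ∈ Icc 1 N, ((n : ℝ) - n * (n + 1) * (Real.log (n + 1) - Real.log n)) < 0 :=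
  sum_neg (fun _ hn => sub_neg.mpr <| Real.lt_mul_mul_log_add_one_sub_log <|
    Nat.cast_pos.mpr (mem_Icc.mp hn).1) ⟨1, mem_Icc.mpr ⟨le_rfl, hN⟩⟩

noncomputable def zetaWSum (N : ℕ) (s : ℂ) : ℂ :=
  ∑ n ∈ Icc 1 N, ((n : ℂ) * ((n : ℂ) + 1) ^ (-s) - (n : ℂ) ^ ((1 : ℂ) - s) + s * (n : ℂ) ^ (-s))

theorem zetaW_eq_div (N : ℕ) (s : ℂ) : zetaW N s = zetaWSum N s / (s - 1) := by
  rw [zetaW, zetaWSum, one_div_mul_eq_div]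

theorem hasDerivAt_zetaWSum (N : ℕ) (s : ℂ) :
    HasDerivAt (zetaWSum N)
      (∑ n ∈ Icc 1 N, ((n : ℂ) ^ (-s) - n * (n + 1) ^ (-s) * log (n + 1)
        + (n : ℂ) ^ (1 - s) * log n - s * (n : ℂ) ^ (-s) * log n)) s := by
  refine HasDerivAt.fun_sum fun n hn => ?_
  have hn0 : (n : ℂ) ≠ 0 := Nat.cast_ne_zero.mpr (by grind)
  have hn1 : (n : ℂ) + 1 ≠ 0 := by exact_mod_cast n.succ_ne_zero
  have hneg := hasDerivAt_neg' s
  refine ((((hneg.const_cpow (Or.inl hn1)).const_mul (n : ℂ)).sub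
    (((hasDerivAt_id s).const_sub 1).const_cpow (Or.inl hn0))).add
    ((hasDerivAt_id s).mul (hneg.const_cpow (Or.inl hn0)))).congr_deriv ?_
  simp only [id]
  ring

theorem zetaWSum_neg_one (N : ℕ) : zetaWSum N (-1) = 0 := by
  refine sum_eq_zero fun n _ => ?_
  rw [neg_neg, show (1 : ℂ) - -1 = (2 : ℕ) by norm_num, cpow_one, cpow_one, cpow_natCast]
  ring

theorem hasDerivAt_zetaWSum_neg_one (N : ℕ) :
    HasDerivAt (zetaWSum N)
      (∑ n ∈ Icc 1 N, ((n : ℝ) - n * (n + 1) * (Real.log (n + 1) - Real.log n)) : ℝ) (-1) := by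
  refine (hasDerivAt_zetaWSum N (-1)).congr_deriv ?_
  push_cast
  refine sum_congr rfl fun n _ => ?_
  rw [neg_neg, show (1 : ℂ) - -1 = (2 : ℕ) by norm_num, cpow_one, cpow_one, cpow_natCast,
    ← natCast_log, ← Nat.cast_succ, ← natCast_log]
  push_cast
  ring

theorem zetaWSum_two (N : ℕ) :
    zetaWSum N 2 = N / ((N : ℂ) + 1) ^ 2 + ∑ n ∈ Icc 1 N, 1 / (n : ℂ) ^ 2 := by
  induction N with
  | zero => simp [zetaWSum]
  | succ N ih =>
    rw [zetaWSum, sum_Icc_succ_top (by omega), ← zetaWSum, ih, sum_Icc_succ_top (by omega)]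
    have hN1 : (N : ℂ) + 1 ≠ 0 := by exact_mod_cast N.succ_ne_zero
    have hN2 : (N : ℂ) + 1 + 1 ≠ 0 := by exact_mod_cast (N + 1).succ_ne_zero
    rw [show (-2 : ℂ) = -(2 : ℕ) by norm_num, show (1 : ℂ) - 2 = -1 by norm_num]
    simp only [cpow_neg, cpow_natCast, cpow_one, Nat.cast_add, Nat.cast_one]
    field_simp
    ring

theorem continuousAt_zetaW (N : ℕ) {s : ℂ} (hs : s ≠ 1) : ContinuousAt (zetaW N) s := by
  rw [show zetaW N = fun s => zetaWSum N s / (s - 1) from funext (zetaW_eq_div N)]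
  exact (hasDerivAt_zetaWSum N s).continuousAt.div (continuousAt_id.sub continuousAt_const)
    (sub_ne_zero.mpr hs)

theorem hasDerivAt_zetaW_one_sub_two (N : ℕ) :
    HasDerivAt (fun s => zetaW N (1 - s))
      ((∑ n ∈ Icc 1 N, ((n : ℝ) - n * (n + 1) * (Real.log (n + 1) - Real.log n)) : ℝ) / 2) 2 := by
  have hT := hasDerivAt_zetaWSum_neg_one N
  rw [show (-1 : ℂ) = 1 - 2 by norm_num] at hT
  have hlin : HasDerivAt (fun s : ℂ => 1 - s - 1) (-1) 2 :=
    ((hasDerivAt_id 2).const_sub 1).sub_const 1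
  simp only [zetaW_eq_div]
  refine ((hT.comp_const_sub 1 2).div hlin (by norm_num)).congr_deriv ?_
  rw [show (1 : ℂ) - 2 = -1 by norm_num, zetaWSum_neg_one]
  ring

theorem residue_chiW_inv_at_two (N : ℕ) (hN : 0 < N) :
    Filter.Tendsto (fun s : ℂ => (s - 2) * zetaW N s / zetaW N (1 - s))
      (nhdsWithin 2 {(2 : ℂ)}ᶜ)
      (nhds ((2 * (N : ℂ) / ((N : ℂ) + 1) ^ 2
            - 2 * ∑' k : ℕ, 1 / ((k : ℂ) + (N : ℂ) + 1) ^ 2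
            + 2 * riemannZeta 2) /
          (((N : ℂ) + 1) ^ 2 / 2 - (N : ℂ) / 2 - 1 / 2
            - ∑ n ∈ Finset.Icc 1 N,
                (n : ℂ) * ((n : ℂ) + 1) *
                  ((Real.log ((n : ℝ) + 1) : ℂ) - (Real.log (n : ℝ) : ℂ))))) := by
  have hden : ((N : ℂ) + 1) ^ 2 / 2 - (N : ℂ) / 2 - 1 / 2
      - ∑ n ∈ Finset.Icc 1 N, (n : ℂ) * ((n : ℂ) + 1) *
          ((Real.log ((n : ℝ) + 1) : ℂ) - (Real.log (n : ℝ) : ℂ))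
      = ((∑ n ∈ Icc 1 N, ((n : ℝ) - n * (n + 1) * (Real.log (n + 1) - Real.log n)) : ℝ) : ℂ) := by
    push_cast
    rw [sum_sub_distrib]
    linear_combination -(sum_Icc_natCast_mul_two (R := ℂ) N) / 2
  have hden_ne := ofReal_ne_zero.mpr (sum_sub_mul_log_add_one_sub_log_neg hN).ne
  have hzero : zetaW N (1 - 2) = 0 := by
    rw [zetaW_eq_div, show (1 : ℂ) - 2 = -1 by norm_num, zetaWSum_neg_one, zero_div]
  convert (hasDerivAt_zetaW_one_sub_two N).tendsto_sub_mul_div_of_eq_zero hzero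
    (div_ne_zero hden_ne two_ne_zero) (continuousAt_zetaW N (by norm_num)) using 2
  rw [hden, zetaW_eq_div, zetaWSum_two, tsum_one_div_add_pow_eq_riemannZeta_sub N one_lt_two]
  push_cast
  field_simp
  ring
end

section
/- The residue at s = 2 of the reciprocal reflection function vanishes as N → ∞: lim_{N→∞} ( 2N/(N+1)² − 2·Σ_{k=N+1}^∞ k^{−2} + 2·ζ(2) ) / ( (N+1)²/2 − N/2 − 1/2 − Σ_{n=1}^N n·(n+1)·(ln(n+1) − ln(n)) ) = 0. -/
/-!
The numerator converges (to `π ^ 2 / 3`, since the tail of `∑ 1 / k ^ 2` vanishes), while the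
denominator tends to `-∞`: by `log (1 + y) ≥ 2 y / (y + 2)`, each summand
`n (n + 1) (log (n + 1) - log n)` exceeds `n + 1 / 4`, so passing from `N` to `N + 1` lowers the
denominator by at least `1 / 4`.
-/

open Filter Real Finset Topology

lemma add_quarter_le_mul_log_add_one_sub_log {x : ℝ} (hx : 1 / 2 ≤ x) :
    x + 1 / 4 ≤ x * (x + 1) * (log (x + 1) - log x) := by
  have hx₀ : 0 < x := by linarith
  have hlog : log (x + 1) - log x = log (1 + x⁻¹) := by
    rw [← log_div (by positivity) hx₀.ne']
    congr 1
    field_simp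
  have hpade : 2 / (2 * x + 1) ≤ log (1 + x⁻¹) := by
    convert le_log_one_add_of_nonneg (inv_nonneg.mpr hx₀.le) using 1
    field_simp
    ring
  calc x + 1 / 4 ≤ x * (x + 1) * (2 / (2 * x + 1)) := by
        rw [mul_div_assoc', le_div_iff₀ (by positivity)]
        nlinarith
    _ ≤ x * (x + 1) * (log (x + 1) - log x) := by
        rw [hlog]
        gcongr

lemma denominator_le (N : ℕ) :
    ((N : ℝ) + 1) ^ 2 / 2 - (N : ℝ) / 2 - 1 / 2
        - ∑ n ∈ Icc 1 N, (n : ℝ) * ((n : ℝ) + 1) * (log ((n : ℝ) + 1) - log (n : ℝ))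
      ≤ -(N : ℝ) / 4 := by
  induction N with
  | zero => norm_num
  | succ N ih =>
    rw [sum_Icc_succ_top (by omega)]
    have hterm := add_quarter_le_mul_log_add_one_sub_log (x := ((N + 1 : ℕ) : ℝ))
      (by push_cast; linarith [(N.cast_nonneg : (0 : ℝ) ≤ N)])
    push_cast at hterm ⊢
    linarith

lemma tendsto_two_mul_div_add_one_sq :
    Tendsto (fun N : ℕ => 2 * (N : ℝ) / ((N : ℝ) + 1) ^ 2) atTop (𝓝 0) := by
  refine squeeze_zero (fun N => by positivity) (fun N => ?_)
    (tendsto_const_div_atTop_nhds_zero_nat 2)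
  rcases N.eq_zero_or_pos with rfl | hN
  · simp
  · have hN' : (1 : ℝ) ≤ N := by exact_mod_cast hN
    rw [div_le_div_iff₀ (by positivity) (by positivity)]
    nlinarith

lemma tendsto_tsum_one_div_add_add_one_sq :
    Tendsto (fun N : ℕ => ∑' k : ℕ, 1 / ((k : ℝ) + (N : ℝ) + 1) ^ 2) atTop (𝓝 0) := by
  convert (tendsto_sum_nat_add fun m : ℕ => 1 / (m : ℝ) ^ 2).comp (tendsto_add_atTop_nat 1)
    using 2 with N
  simp only [Function.comp_apply, Nat.cast_add, Nat.cast_one, add_assoc]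

theorem residue_chiW_inv_at_two_vanishes :
    Filter.Tendsto
      (fun N : ℕ =>
        (2 * (N : ℝ) / ((N : ℝ) + 1) ^ 2
            - 2 * ∑' k : ℕ, 1 / ((k : ℝ) + (N : ℝ) + 1) ^ 2
            + 2 * (Real.pi ^ 2 / 6)) /
          (((N : ℝ) + 1) ^ 2 / 2 - (N : ℝ) / 2 - 1 / 2
            - ∑ n ∈ Finset.Icc 1 N,
                (n : ℝ) * ((n : ℝ) + 1) * (Real.log ((n : ℝ) + 1) - Real.log (n : ℝ))))
      Filter.atTop (nhds 0) := by
  have hnum := (tendsto_two_mul_div_add_one_sq.sub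
    (tendsto_tsum_one_div_add_add_one_sq.const_mul 2)).add_const (2 * (π ^ 2 / 6))
  have hden := tendsto_atBot_mono denominator_le
    ((tendsto_neg_atTop_atBot.comp tendsto_natCast_atTop_atTop).atBot_div_const
      (by norm_num : (0 : ℝ) < 4))
  exact hnum.div_atBot hden
end
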